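/- arXiv:2110.03045 — 2 statements merged into one kernel-verified Lean document; each statement's English description precedes it below -/
import Mathlib

section
/- Scalar variance bound for iterate-averaged 3DVAR: let A ≠ 0, Σ > 0, α > 0, γ > 0 be real, and on a probability space let (η_j)_{j≥1} be independent real random variables, each Gaussian with mean 0 and variance γ². Then for every τ_v ∈ [0,1] and every n ≥ 1, the averaged variance term Ī_n^{var} = (1/n) Σ_{j=1}^{n} Σ A q_{n−j+1,α}(A²Σ) η_j satisfies E[|Ī_n^{var}|²] ≤ (Σγ²/α)(A²Σ)^{−τ_v} (n/α)^{−τ_v}. -/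
/-!
The average is a linear combination `∑ c_j η_j` of independent centred Gaussians with
`c_j = λ q_{n-j+1,α}(λ) / (n A)`, `λ = A²Σ`, so its second moment is `γ² ∑ c_j²`.
The filter value `λ q_{m,α}(λ) = 1 - (α/(α+λ))^m` lies in `[0, min 1 (mλ/α)]` (Bernoulli),
so its square is at most `(nλ/α)^(1-τ)` for `m ≤ n`; summing the `n` terms gives
`γ²/(nA²) · (nλ/α)^(1-τ) = (Σγ²/α) λ^(-τ) (n/α)^(-τ)`.
-/

open MeasureTheory ProbabilityTheory Finset

noncomputable def qFun (n : ℕ) (α l : ℝ) : ℝ := l⁻¹ * (1 - (α / (α + l)) ^ n)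

open scoped NNReal

namespace ProbabilityTheory

variable {Ω ι : Type*} [MeasurableSpace Ω] {μ : Measure Ω}

lemma integral_sq_sum_const_mul_of_pairwise_indepFun [IsFiniteMeasure μ] {η : ι → Ω → ℝ}
    (s : Finset ι) (hindep : Set.Pairwise ↑s fun i j ↦ η i ⟂ᵢ[μ] η j) (c : ι → ℝ) {v : ℝ}
    (hL2 : ∀ j ∈ s, MemLp (η j) 2 μ) (hmean : ∀ j ∈ s, μ[η j] = 0)
    (hvar : ∀ j ∈ s, Var[η j; μ] = v) :
    ∫ ω, (∑ j ∈ s, c j * η j ω) ^ 2 ∂μ = (∑ j ∈ s, c j ^ 2) * v := by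
  have hL2c : ∀ j ∈ s, MemLp (fun ω ↦ c j * η j ω) 2 μ := fun j hj ↦ (hL2 j hj).const_mul (c j)
  have hpair : Set.Pairwise ↑s fun i j ↦ (fun ω ↦ c i * η i ω) ⟂ᵢ[μ] fun ω ↦ c j * η j ω :=
    fun i hi j hj hij ↦ (hindep hi hj hij).comp (measurable_const_mul (c i))
      (measurable_const_mul (c j))
  have hsum_mean : ∫ ω, ∑ j ∈ s, c j * η j ω ∂μ = 0 := by
    rw [integral_finsetSum s fun j hj ↦ (hL2c j hj).integrable one_le_two]
    exact sum_eq_zero fun j hj ↦ by rw [integral_const_mul, hmean j hj, mul_zero]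
  calc ∫ ω, (∑ j ∈ s, c j * η j ω) ^ 2 ∂μ = Var[∑ j ∈ s, fun ω ↦ c j * η j ω; μ] := by
        rw [Finset.sum_fn, variance_of_integral_eq_zero
          (memLp_finsetSum s hL2c).aemeasurable hsum_mean]
    _ = ∑ j ∈ s, c j ^ 2 * v := by
        rw [IndepFun.variance_sum hL2c hpair]
        exact sum_congr rfl fun j hj ↦ by rw [variance_const_mul, hvar j hj]
    _ = (∑ j ∈ s, c j ^ 2) * v := (sum_mul ..).symm

lemma hasLaw_of_map_eq {𝓧 : Type*} [MeasurableSpace 𝓧] {X : Ω → 𝓧} {ν : Measure 𝓧}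
    [IsProbabilityMeasure ν] (h : μ.map X = ν) : HasLaw X ν μ :=
  ⟨.of_map_ne_zero (h ▸ IsProbabilityMeasure.ne_zero ν), h⟩

variable {X : Ω → ℝ} {m : ℝ} {v : ℝ≥0}

lemma HasLaw.memLp_two_of_gaussianReal (hX : HasLaw X (gaussianReal m v) μ) : MemLp X 2 μ :=
  (memLp_map_measure_iff aestronglyMeasurable_id hX.aemeasurable).1
    (hX.map_eq ▸ memLp_id_gaussianReal 2)

lemma HasLaw.integral_eq_of_gaussianReal (hX : HasLaw X (gaussianReal m v) μ) : μ[X] = m := by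
  rw [hX.integral_eq, integral_id_gaussianReal]

lemma HasLaw.variance_eq_of_gaussianReal (hX : HasLaw X (gaussianReal m v) μ) :
    Var[X; μ] = v := by
  rw [hX.variance_eq, variance_id_gaussianReal]

end ProbabilityTheory

lemma sq_le_rpow_one_sub {x t τ : ℝ} (hx0 : 0 ≤ x) (hx1 : x ≤ 1) (hxt : x ≤ t) (hτ0 : 0 ≤ τ)
    (hτ1 : τ ≤ 1) : x ^ 2 ≤ t ^ (1 - τ) := by
  calc x ^ 2 = x ^ (2 : ℝ) := (Real.rpow_natCast x 2).symm
    _ ≤ x ^ (1 - τ) := Real.rpow_le_rpow_of_exponent_ge' hx0 hx1 (by linarith) (by linarith)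
    _ ≤ t ^ (1 - τ) := Real.rpow_le_rpow hx0 hxt (by linarith)

section FilterFunction

variable {α l : ℝ}

lemma mul_qFun (m : ℕ) (hl : l ≠ 0) : l * qFun m α l = 1 - (α / (α + l)) ^ m := by
  rw [qFun, mul_inv_cancel_left₀ hl]

lemma mul_qFun_nonneg (hα : 0 < α) (hl : 0 < l) (m : ℕ) : 0 ≤ l * qFun m α l := by
  rw [mul_qFun m hl.ne', sub_nonneg]
  exact pow_le_one₀ (by positivity) ((div_le_one (by positivity)).2 (by linarith))

lemma mul_qFun_le_one (hα : 0 < α) (hl : 0 < l) (m : ℕ) : l * qFun m α l ≤ 1 := by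
  rw [mul_qFun m hl.ne', sub_le_self_iff]
  positivity

lemma mul_qFun_le (hα : 0 < α) (hl : 0 < l) (m : ℕ) : l * qFun m α l ≤ m * l / α := by
  have hr : 1 - α / (α + l) = l / (α + l) := by field_simp; ring
  have hbernoulli := one_add_mul_le_pow (a := α / (α + l) - 1) (by
    have : 0 ≤ α / (α + l) := by positivity
    linarith) m
  rw [add_sub_cancel] at hbernoulli
  calc l * qFun m α l ≤ m * (1 - α / (α + l)) := by rw [mul_qFun m hl.ne']; linarith
    _ = m * l / (α + l) := by rw [hr, mul_div_assoc]
    _ ≤ m * l / α := by gcongr; linarith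

lemma sum_sq_mul_qFun_le {τ : ℝ} (hα : 0 < α) (hl : 0 < l) (hτ0 : 0 ≤ τ) (hτ1 : τ ≤ 1)
    (n : ℕ) : ∑ j ∈ Icc 1 n, (l * qFun (n - j + 1) α l) ^ 2 ≤ n * (n * l / α) ^ (1 - τ) := by
  have hterm : ∀ j ∈ Icc 1 n, (l * qFun (n - j + 1) α l) ^ 2 ≤ (n * l / α) ^ (1 - τ) := by
    intro j hj
    have hjn : ((n - j + 1 : ℕ) : ℝ) ≤ n := by
      obtain ⟨hj1, hj_le⟩ := mem_Icc.1 hj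
      exact_mod_cast (by omega : n - j + 1 ≤ n)
    refine sq_le_rpow_one_sub (mul_qFun_nonneg hα hl _) (mul_qFun_le_one hα hl _)
      ((mul_qFun_le hα hl _).trans ?_) hτ0 hτ1
    gcongr
  simpa using sum_le_card_nsmul _ _ _ hterm

end FilterFunction

theorem scalar_3dvar_averaged_variance_bound_general
    {Ω : Type*} [MeasurableSpace Ω] (μ : Measure Ω) [IsProbabilityMeasure μ]
    (A Sg α γ : ℝ) (hA : A ≠ 0) (hSg : 0 < Sg) (hα : 0 < α)
    (η : ℕ → Ω → ℝ)
    (hindep : iIndepFun η μ)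
    (hgauss : ∀ j, 1 ≤ j → Measure.map (η j) μ = gaussianReal 0 (Real.toNNReal (γ ^ 2))) :
    ∀ τv : ℝ, τv ∈ Set.Icc (0:ℝ) 1 → ∀ n : ℕ, 1 ≤ n →
      ∫ ω, ((1 / (n : ℝ)) *
          ∑ j ∈ Icc 1 n, Sg * A * qFun (n - j + 1) α (A ^ 2 * Sg) * η j ω) ^ 2 ∂μ ≤
        (Sg * γ ^ 2 / α) * (A ^ 2 * Sg) ^ (-τv) * ((n : ℝ) / α) ^ (-τv) := by
  rintro τv ⟨hτ0, hτ1⟩ n hn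
  set l := A ^ 2 * Sg
  have hl : 0 < l := by positivity
  have hn' : (0 : ℝ) < n := by exact_mod_cast hn
  have hlaw : ∀ j ∈ Icc 1 n, HasLaw (η j) (gaussianReal 0 (γ ^ 2).toNNReal) μ :=
    fun j hj ↦ hasLaw_of_map_eq (hgauss j (mem_Icc.1 hj).1)
  have hcoef : ∀ ω, (1 / (n : ℝ)) * ∑ j ∈ Icc 1 n, Sg * A * qFun (n - j + 1) α l * η j ω =
      ∑ j ∈ Icc 1 n, l * qFun (n - j + 1) α l / (n * A) * η j ω := fun ω ↦ by
    rw [mul_sum]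
    refine sum_congr rfl fun j _ ↦ ?_
    simp only [l]
    field_simp
  have hγ2 : ((γ ^ 2).toNNReal : ℝ) = γ ^ 2 := Real.coe_toNNReal _ (sq_nonneg γ)
  simp_rw [hcoef]
  rw [integral_sq_sum_const_mul_of_pairwise_indepFun _ (fun i _ j _ hij ↦ hindep.indepFun hij) _
    (fun j hj ↦ (hlaw j hj).memLp_two_of_gaussianReal)
    (fun j hj ↦ (hlaw j hj).integral_eq_of_gaussianReal)
    (fun j hj ↦ (hlaw j hj).variance_eq_of_gaussianReal), hγ2]
  simp_rw [div_pow, ← sum_div]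
  have hsplit : (n * l / α) ^ (1 - τv) = n * l / α * (l ^ (-τv) * (n / α) ^ (-τv)) := by
    have ht : 0 < n * l / α := by positivity
    rw [← Real.mul_rpow hl.le (by positivity), show l * (n / α) = n * l / α by ring,
      Real.rpow_sub ht, Real.rpow_one, Real.rpow_neg ht.le, div_eq_mul_inv]
  calc (∑ j ∈ Icc 1 n, (l * qFun (n - j + 1) α l) ^ 2) / (n * A) ^ 2 * γ ^ 2
      ≤ n * (n * l / α) ^ (1 - τv) / (n * A) ^ 2 * γ ^ 2 := by
        gcongr
        exact sum_sq_mul_qFun_le hα hl hτ0 hτ1 n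
    _ = Sg * γ ^ 2 / α * l ^ (-τv) * (n / α) ^ (-τv) := by
        rw [hsplit]
        simp only [l]
        field_simp

/-- Scalar variance bound for iterate-averaged 3DVAR:
`E[|Ī_n^{var}|²] ≤ (Σγ²/α)(A²Σ)^{−τ_v}(n/α)^{−τ_v}` for all `τ_v ∈ [0,1]`, `n ≥ 1`. -/
theorem scalar_3dvar_averaged_variance_bound
    {Ω : Type*} [MeasurableSpace Ω] (μ : Measure Ω) [IsProbabilityMeasure μ]
    (A Sg α γ : ℝ) (hA : A ≠ 0) (hSg : 0 < Sg) (hα : 0 < α) (hγ : 0 < γ)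
    (η : ℕ → Ω → ℝ) (hmeas : ∀ j, Measurable (η j))
    (hindep : iIndepFun η μ)
    (hgauss : ∀ j, 1 ≤ j → Measure.map (η j) μ = gaussianReal 0 (Real.toNNReal (γ ^ 2))) :
    ∀ τv : ℝ, τv ∈ Set.Icc (0:ℝ) 1 → ∀ n : ℕ, 1 ≤ n →
      ∫ ω, ((1 / (n : ℝ)) *
          ∑ j ∈ Icc 1 n, Sg * A * qFun (n - j + 1) α (A ^ 2 * Sg) * η j ω) ^ 2 ∂μ ≤
        (Sg * γ ^ 2 / α) * (A ^ 2 * Sg) ^ (-τv) * ((n : ℝ) / α) ^ (-τv) :=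
  scalar_3dvar_averaged_variance_bound_general μ A Sg α γ hA hSg hα η hindep hgauss
end

section
/- Bias bound for iterate-averaged 3DVAR in the simultaneously diagonalized case: under the diagonal setup, suppose the initial error sequence (v_{0,i})_{i≥1} satisfies Σ_{i=1}^∞ i^{2β} v_{0,i}² < ∞, and let τ_b ∈ [0,1] satisfy τ_b ≤ (t(1+2ε) + 2β)/(2(1 + 2ε + 2p)). Then there exists a constant C > 0 such that for every n ≥ 1 and the given α, the squared bias B_n(α) = (α/n)² Σ_{i=1}^∞ σ_i^t q_{n,α}(σ_i a_i²)² v_{0,i}² satisfies B_n(α) ≤ C (n/α)^{−2τ_b}. -/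
open Finset

/-- Squared bias of iterate-averaged 3DVAR in the diagonal case (sequences are 1-based):
`B_n(α) = (α/n)² Σ_{i≥1} σ_i^t q_{n,α}(σ_i a_i²)² v_{0,i}²`. -/
noncomputable def Bterm (σ a v0 : ℕ → ℝ) (t : ℝ) (α : ℝ) (n : ℕ) : ℝ :=
  (α / (n : ℝ)) ^ 2 *
    ∑' i : ℕ, (σ (i + 1)) ^ t * (qFun n α (σ (i + 1) * (a (i + 1)) ^ 2)) ^ 2 * (v0 (i + 1)) ^ 2

/-- Variance term of iterate-averaged 3DVAR in the diagonal case (sequences are 1-based):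
`V_n(α) = (γ²/n²) Σ_{j=1}^n Σ_{i≥1} σ_i^{t+2} a_i² q_{j,α}(σ_i a_i²)²`. -/
noncomputable def Vterm (σ a : ℕ → ℝ) (t γ : ℝ) (α : ℝ) (n : ℕ) : ℝ :=
  (γ ^ 2 / (n : ℝ) ^ 2) *
    ∑ j ∈ Icc 1 n, ∑' i : ℕ,
      (σ (i + 1)) ^ (t + 2) * (a (i + 1)) ^ 2 * (qFun j α (σ (i + 1) * (a (i + 1)) ^ 2)) ^ 2

/-! Work coordinatewise, with `λ = σ_i a_i²`. Bernoulli's inequality gives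
`(α/n) q_{n,α}(λ) ≤ α/(α+λ) ≤ 1`, and `q_{n,α}(λ) ≤ λ⁻¹` gives `(α/n) q_{n,α}(λ) ≤ α/(nλ)`;
interpolating between the two, `((α/n) q_{n,α}(λ))² ≤ (α/(nλ))^{2τ_b}` for `τ_b ∈ [0,1]`.
Since `λ ≳ i^{-(1+2ε+2p)}` and `σ_i^t ≲ i^{-(1+2ε)t}`, the condition on `τ_b` is exactly what
bounds `σ_i^t λ^{-2τ_b}` by a multiple of `i^{2β}`, and the source condition on `v₀` makes the
resulting series converge. -/

open Real

section qFun

variable {n : ℕ} {α l : ℝ}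

lemma qFun_nonneg (hα : 0 ≤ α) (hl : 0 < l) : 0 ≤ qFun n α l := by
  have hr : α / (α + l) ≤ 1 := div_le_one_of_le₀ (by linarith) (by linarith)
  exact mul_nonneg (inv_nonneg.mpr hl.le)
    (sub_nonneg.mpr (pow_le_one₀ (by positivity) hr))

lemma qFun_le_inv (hα : 0 ≤ α) (hl : 0 < l) : qFun n α l ≤ l⁻¹ :=
  mul_le_of_le_one_right (inv_nonneg.mpr hl.le)
    (sub_le_self _ (pow_nonneg (by positivity) n))

lemma qFun_le_div_add (hα : 0 ≤ α) (hl : 0 < l) : qFun n α l ≤ n / (α + l) := by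
  have hαl : 0 < α + l := by linarith
  have hbern := one_add_mul_le_pow (a := -(l / (α + l)))
    (by linarith [div_le_one_of_le₀ (by linarith : l ≤ α + l) hαl.le]) n
  rw [show 1 + -(l / (α + l)) = α / (α + l) by field_simp; ring] at hbern
  calc qFun n α l ≤ l⁻¹ * (n * (l / (α + l))) := by
        unfold qFun; gcongr; linarith
    _ = n / (α + l) := by field_simp

lemma div_mul_qFun_le_one (hα : 0 ≤ α) (hl : 0 < l) : α / n * qFun n α l ≤ 1 := by
  rcases n.eq_zero_or_pos with rfl | hn
  · simp
  calc α / n * qFun n α l ≤ α / n * (n / (α + l)) := by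
        gcongr; exact qFun_le_div_add hα hl
    _ = α / (α + l) := by field_simp
    _ ≤ 1 := div_le_one_of_le₀ (by linarith) (by linarith)

lemma sq_div_mul_qFun_le {s : ℝ} (hα : 0 ≤ α) (hl : 0 < l) (hs0 : 0 ≤ s) (hs1 : s ≤ 1) :
    (α / n * qFun n α l) ^ 2 ≤ (α / n) ^ (2 * s) * l ^ (-(2 * s)) := by
  have hA0 : 0 ≤ α / n * qFun n α l := mul_nonneg (by positivity) (qFun_nonneg hα hl)
  calc (α / n * qFun n α l) ^ 2 = (α / n * qFun n α l) ^ ((2 : ℕ) : ℝ) := (rpow_natCast _ 2).symm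
    _ ≤ (α / n * qFun n α l) ^ (2 * s) :=
        rpow_le_rpow_of_exponent_ge' hA0 (div_mul_qFun_le_one hα hl) (by linarith)
          (by push_cast; linarith)
    _ ≤ (α / n * l⁻¹) ^ (2 * s) := by
        gcongr; exact qFun_le_inv hα hl
    _ = (α / n) ^ (2 * s) * l ^ (-(2 * s)) := by
        rw [mul_rpow (by positivity) (by positivity), inv_rpow hl.le, rpow_neg hl.le]

end qFun

section PowerBounds

variable {x r p c₁ c₂ σ a : ℝ}

lemma mul_rpow_neg_le_mul_sq (hx : 0 < x) (hc₁ : 0 < c₁) (hσ : c₁ * x ^ (-r) ≤ σ)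
    (ha : c₁ * x ^ (-p) ≤ a) : c₁ ^ 3 * x ^ (-(r + 2 * p)) ≤ σ * a ^ 2 := by
  have hσ0 : 0 ≤ σ := le_trans (by positivity) hσ
  calc c₁ ^ 3 * x ^ (-(r + 2 * p)) = c₁ * x ^ (-r) * (c₁ * x ^ (-p)) ^ 2 := by
        rw [show -(r + 2 * p) = -r + (-p + -p) by ring, rpow_add hx, rpow_add hx]; ring
    _ ≤ σ * a ^ 2 := by gcongr

lemma rpow_le_mul_rpow_of_le_mul_rpow {t : ℝ} (hx : 0 ≤ x) (ht : 0 ≤ t) (hσ0 : 0 ≤ σ)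
    (hc₂ : 0 ≤ c₂) (hσ : σ ≤ c₂ * x ^ (-r)) : σ ^ t ≤ c₂ ^ t * x ^ (-r * t) := by
  rw [rpow_mul hx, ← mul_rpow hc₂ (by positivity)]
  exact rpow_le_rpow hσ0 hσ ht

lemma rpow_mul_rpow_neg_le {t s β : ℝ} (hx : 1 ≤ x) (ht : 0 ≤ t) (hs : 0 ≤ s) (hc₁ : 0 < c₁)
    (hσ : c₁ * x ^ (-r) ≤ σ ∧ σ ≤ c₂ * x ^ (-r)) (ha : c₁ * x ^ (-p) ≤ a)
    (hexp : 2 * s * (r + 2 * p) ≤ t * r + 2 * β) :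
    σ ^ t * (σ * a ^ 2) ^ (-(2 * s)) ≤ c₂ ^ t * (c₁ ^ 3) ^ (-(2 * s)) * x ^ (2 * β) := by
  have hx0 : 0 < x := one_pos.trans_le hx
  have hσ0 : 0 < σ := lt_of_lt_of_le (by positivity) hσ.1
  have hc₂ : 0 < c₂ := pos_of_mul_pos_left (hσ0.trans_le hσ.2) (rpow_pos_of_pos hx0 _).le
  calc σ ^ t * (σ * a ^ 2) ^ (-(2 * s))
      ≤ (c₂ ^ t * x ^ (-r * t)) * (c₁ ^ 3 * x ^ (-(r + 2 * p))) ^ (-(2 * s)) := by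
        refine mul_le_mul (rpow_le_mul_rpow_of_le_mul_rpow hx0.le ht hσ0.le hc₂.le hσ.2) ?_
          (by positivity) (by positivity)
        exact rpow_le_rpow_of_nonpos (by positivity) (mul_rpow_neg_le_mul_sq hx0 hc₁ hσ.1 ha)
          (by linarith)
    _ = c₂ ^ t * (c₁ ^ 3) ^ (-(2 * s)) * x ^ (-r * t + 2 * s * (r + 2 * p)) := by
        rw [mul_rpow (by positivity) (by positivity), ← rpow_mul hx0.le, rpow_add hx0]
        ring_nf
    _ ≤ c₂ ^ t * (c₁ ^ 3) ^ (-(2 * s)) * x ^ (2 * β) := by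
        gcongr
        linarith

lemma bias_summand_le {n : ℕ} {α v t s β : ℝ} (hα : 0 ≤ α) (hx : 1 ≤ x) (ht : 0 ≤ t)
    (hs0 : 0 ≤ s) (hs1 : s ≤ 1) (hc₁ : 0 < c₁) (hσ : c₁ * x ^ (-r) ≤ σ ∧ σ ≤ c₂ * x ^ (-r))
    (ha : c₁ * x ^ (-p) ≤ a) (hexp : 2 * s * (r + 2 * p) ≤ t * r + 2 * β) :
    (α / n) ^ 2 * (σ ^ t * qFun n α (σ * a ^ 2) ^ 2 * v ^ 2) ≤
      (α / n) ^ (2 * s) * (c₂ ^ t * (c₁ ^ 3) ^ (-(2 * s))) * (x ^ (2 * β) * v ^ 2) := by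
  have hσ0 : 0 < σ := lt_of_lt_of_le (by positivity) hσ.1
  have hl : 0 < σ * a ^ 2 := mul_pos hσ0 (pow_pos (lt_of_lt_of_le (by positivity) ha) 2)
  calc (α / n) ^ 2 * (σ ^ t * qFun n α (σ * a ^ 2) ^ 2 * v ^ 2)
      = σ ^ t * v ^ 2 * (α / n * qFun n α (σ * a ^ 2)) ^ 2 := by ring
    _ ≤ σ ^ t * v ^ 2 * ((α / n) ^ (2 * s) * (σ * a ^ 2) ^ (-(2 * s))) := by
        gcongr; exact sq_div_mul_qFun_le hα hl hs0 hs1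
    _ = (α / n) ^ (2 * s) * (σ ^ t * (σ * a ^ 2) ^ (-(2 * s))) * v ^ 2 := by ring
    _ ≤ (α / n) ^ (2 * s) * (c₂ ^ t * (c₁ ^ 3) ^ (-(2 * s)) * x ^ (2 * β)) * v ^ 2 := by
        have hweight := rpow_mul_rpow_neg_le hx ht hs0 hc₁ hσ ha hexp
        have hfactor := rpow_nonneg (div_nonneg hα n.cast_nonneg) (2 * s)
        gcongr
    _ = _ := by ring

end PowerBounds

lemma tsum_le_mul_tsum_of_le {f g : ℕ → ℝ} {c : ℝ} (hf : ∀ i, 0 ≤ f i) (hfg : ∀ i, f i ≤ c * g i)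
    (hg : Summable g) : ∑' i, f i ≤ c * ∑' i, g i := by
  rw [← tsum_mul_left]
  exact (Summable.of_nonneg_of_le hf hfg (hg.mul_left c)).tsum_le_tsum hfg (hg.mul_left c)

theorem diagonal_bias_bound_general
    (ε p α t β : ℝ) (hε : 0 < ε) (hp : 0 < p) (hα : 0 < α) (ht : 0 ≤ t)
    (σ a v0 : ℕ → ℝ) (c₁ c₂ : ℝ) (hc₁ : 0 < c₁) (hc₁₂ : c₁ ≤ c₂)
    (hσ : ∀ i : ℕ, 1 ≤ i → c₁ * (i : ℝ) ^ (-1 - 2 * ε) ≤ σ i ∧ σ i ≤ c₂ * (i : ℝ) ^ (-1 - 2 * ε))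
    (ha : ∀ i : ℕ, 1 ≤ i → c₁ * (i : ℝ) ^ (-p) ≤ a i ∧ a i ≤ c₂ * (i : ℝ) ^ (-p))
    (hv : Summable (fun i : ℕ => ((i : ℝ) + 1) ^ (2 * β) * (v0 (i + 1)) ^ 2))
    (τb : ℝ) (hτb0 : 0 ≤ τb) (hτb1 : τb ≤ 1)
    (hτb : τb ≤ (t * (1 + 2 * ε) + 2 * β) / (2 * (1 + 2 * ε + 2 * p))) :
    ∃ C : ℝ, 0 < C ∧ ∀ n : ℕ, 1 ≤ n →
      Bterm σ a v0 t α n ≤ C * ((n : ℝ) / α) ^ (-(2 * τb)) := by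
  have hexp : 2 * τb * (1 + 2 * ε + 2 * p) ≤ t * (1 + 2 * ε) + 2 * β := by
    rw [le_div_iff₀ (by positivity)] at hτb; linarith
  have hσi (i : ℕ) : c₁ * ((i : ℝ) + 1) ^ (-(1 + 2 * ε)) ≤ σ (i + 1) ∧
      σ (i + 1) ≤ c₂ * ((i : ℝ) + 1) ^ (-(1 + 2 * ε)) := by
    simpa [show -1 - 2 * ε = -(1 + 2 * ε) by ring] using hσ (i + 1) (by omega)
  have hai (i : ℕ) : c₁ * ((i : ℝ) + 1) ^ (-p) ≤ a (i + 1) := by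
    simpa using (ha (i + 1) (by omega)).1
  set K := c₂ ^ t * (c₁ ^ 3) ^ (-(2 * τb))
  set S := ∑' i : ℕ, ((i : ℝ) + 1) ^ (2 * β) * (v0 (i + 1)) ^ 2
  have hK : 0 < K := by have hc₂ := hc₁.trans_le hc₁₂; positivity
  have hS : 0 ≤ S := tsum_nonneg fun i => by positivity
  refine ⟨K * (S + 1), by positivity, fun n _ => ?_⟩
  calc Bterm σ a v0 t α n ≤ (α / n) ^ (2 * τb) * K * S := by
        refine tsum_mul_left.symm.le.trans (tsum_le_mul_tsum_of_le (fun i => ?_)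
          (fun i => bias_summand_le hα.le (by simp) ht hτb0 hτb1 hc₁ (hσi i) (hai i) hexp) hv)
        have hσ0 : 0 ≤ σ (i + 1) := le_trans (by positivity) (hσi i).1
        positivity
    _ ≤ K * (S + 1) * ((n : ℝ) / α) ^ (-(2 * τb)) := by
        rw [rpow_neg (by positivity), ← inv_rpow (by positivity), inv_div]
        nlinarith [rpow_nonneg (div_nonneg hα.le n.cast_nonneg) (2 * τb)]

/-- Bias bound for iterate-averaged 3DVAR in the simultaneously diagonalized case:
if `Σ i^{2β} v_{0,i}² < ∞` and `τ_b ≤ (t(1+2ε)+2β)/(2(1+2ε+2p))`, `τ_b ∈ [0,1]`, then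
`B_n(α) ≤ C (n/α)^{−2τ_b}`. -/
theorem diagonal_bias_bound
    (ε p α t β : ℝ) (hε : 0 < ε) (hp : 0 < p) (hα : 0 < α) (ht : 0 ≤ t) (hβ : 0 ≤ β)
    (σ a v0 : ℕ → ℝ) (c₁ c₂ : ℝ) (hc₁ : 0 < c₁) (hc₁₂ : c₁ ≤ c₂)
    (hσ : ∀ i : ℕ, 1 ≤ i → c₁ * (i : ℝ) ^ (-1 - 2 * ε) ≤ σ i ∧ σ i ≤ c₂ * (i : ℝ) ^ (-1 - 2 * ε))
    (ha : ∀ i : ℕ, 1 ≤ i → c₁ * (i : ℝ) ^ (-p) ≤ a i ∧ a i ≤ c₂ * (i : ℝ) ^ (-p))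
    (hv : Summable (fun i : ℕ => ((i : ℝ) + 1) ^ (2 * β) * (v0 (i + 1)) ^ 2))
    (τb : ℝ) (hτb0 : 0 ≤ τb) (hτb1 : τb ≤ 1)
    (hτb : τb ≤ (t * (1 + 2 * ε) + 2 * β) / (2 * (1 + 2 * ε + 2 * p))) :
    ∃ C : ℝ, 0 < C ∧ ∀ n : ℕ, 1 ≤ n →
      Bterm σ a v0 t α n ≤ C * ((n : ℝ) / α) ^ (-(2 * τb)) :=
  diagonal_bias_bound_general ε p α t β hε hp hα ht σ a v0 c₁ c₂ hc₁ hc₁₂ hσ ha hv τb hτb0 hτb1 hτb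
end
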